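/- Define S2(x,n,j) = Σ_{k=2}^{n} P(k)·x_{j+k}·(1−x_{j+k−1})·∏_{m=j−2}^{j+k−2} x_m + Σ_{k=2}^{n} P(k+1)·(1−x_{j+k})·(1−x_{j+k−1})·∏_{m=j−2}^{j+k−2} x_m, where P(k)=1 if k is even, 0 otherwise. Let x ∈ {0,1}^ℤ and y = F156(x). Then S2(y,n,j) = S2(x,n+1,j) − x_{j−2}·x_{j−1}·x_j·(1−x_{j+1})·x_{j+2}. -/

import Mathlib

/-- Polynomial form of the local function of rule 156. -/
def f156 (a b c : ℤ) : ℤ := (1 - a) * b + a * b * c + a * (1 - b) * (1 - c)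

/-- Even-parity indicator: 1 if k is even, 0 if k is odd. -/
def Par (k : ℕ) : ℤ := if Even k then 1 else 0

/-- Vertical strips under solid triangles. -/
noncomputable def S2 (x : ℤ → ℤ) (n : ℕ) (j : ℤ) : ℤ :=
  (∑ k ∈ Finset.Icc 2 n,
      Par k * x (j + k) * (1 - x (j + k - 1)) * ∏ m ∈ Finset.Icc (j - 2) (j + k - 2), x m) +
    ∑ k ∈ Finset.Icc 2 n,
      Par (k + 1) * (1 - x (j + k)) * (1 - x (j + k - 1)) *
        ∏ m ∈ Finset.Icc (j - 2) (j + k - 2), x m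

/-!
For binary `x`, the image under rule 156 of a window of at least three ones is a window of ones one
cell shorter: `∏_{[a, b]} y = ∏_{[a, b + 1]} x` for `b ≥ a + 2`. Where this product is nonzero the
sites `j + k - 2` and `j + k - 1` carry ones, so `y_{j+k-1} = x_{j+k}`, and if `x_{j+k} = 0` then
`y_{j+k} = 1 - x_{j+k+1}`. Hence the `k`-th strip of `S2 y` is the `(k + 1)`-st strip of `S2 x`, and
`S2 y n j` is `S2 x (n + 1) j` without its strip `k = 2`, the subtracted monomial.
-/

open Finset

lemma Par_add_two (k : ℕ) : Par (k + 2) = Par k := by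
  simp [Par, Nat.even_add]

lemma Finset.sum_Icc_add_one_right_eq_add_sum_shift {M : Type*} [AddCommMonoid M] (f : ℕ → M)
    {a b : ℕ} (hab : a ≤ b) :
    ∑ k ∈ Icc a (b + 1), f k = f a + ∑ k ∈ Icc a b, f (k + 1) := by
  rw [← Ico_add_one_right_eq_Icc, ← Ico_add_one_right_eq_Icc,
    sum_eq_sum_Ico_succ_bot (by omega), sum_Ico_add']

lemma Finset.prod_Icc_add_one_right {α M : Type*} [LinearOrder α] [One α] [Add α]
    [LocallyFiniteOrder α] [SuccAddOrder α] [NoMaxOrder α] [CommMonoid M] (f : α → M) {a b : α}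
    (hab : a ≤ b + 1) :
    ∏ m ∈ Icc a (b + 1), f m = (∏ m ∈ Icc a b, f m) * f (b + 1) := by
  rw [← insert_Icc_right_eq_Icc_add_one hab,
    prod_insert fun h ↦ (Order.lt_add_one_iff.2 le_rfl).not_ge (mem_Icc.1 h).2, mul_comm]

lemma mul_prod_eq_prod_of_binary {z : ℤ → ℤ} {s : Finset ℤ} {i : ℤ} (hz : z i = 0 ∨ z i = 1)
    (hi : i ∈ s) : z i * ∏ m ∈ s, z m = ∏ m ∈ s, z m := by
  rcases hz with hz | hz
  · rw [hz, zero_mul, prod_eq_zero hi hz]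
  · rw [hz, one_mul]

lemma mul_mul_f156_of_binary {a b : ℤ} (c : ℤ) (ha : a = 0 ∨ a = 1) (hb : b = 0 ∨ b = 1) :
    a * b * f156 a b c = a * b * c := by
  rcases ha with rfl | rfl <;> rcases hb with rfl | rfl <;> simp [f156]

lemma f156_mul_f156_mul_f156_of_binary {a b c d e : ℤ} (ha : a = 0 ∨ a = 1) (hb : b = 0 ∨ b = 1)
    (hc : c = 0 ∨ c = 1) (hd : d = 0 ∨ d = 1) (he : e = 0 ∨ e = 1) :
    f156 a b c * f156 b c d * f156 c d e = b * c * d * e := by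
  rcases ha with rfl | rfl <;> rcases hb with rfl | rfl <;> rcases hc with rfl | rfl <;>
    rcases hd with rfl | rfl <;> rcases he with rfl | rfl <;> simp [f156]

lemma mul_mul_strip_f156_of_binary {a b c : ℤ} (d p q : ℤ) (ha : a = 0 ∨ a = 1)
    (hb : b = 0 ∨ b = 1) (hc : c = 0 ∨ c = 1) :
    a * b * (p * f156 b c d * (1 - f156 a b c) + q * (1 - f156 b c d) * (1 - f156 a b c)) =
      a * b * (q * d * (1 - c) + p * (1 - d) * (1 - c)) := by
  rcases ha with rfl | rfl <;> rcases hb with rfl | rfl <;> rcases hc with rfl | rfl <;>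
    (simp only [f156]; ring)

noncomputable def strip (x : ℤ → ℤ) (j : ℤ) (k : ℕ) : ℤ :=
  Par k * x (j + k) * (1 - x (j + k - 1)) * ∏ m ∈ Icc (j - 2) (j + k - 2), x m +
    Par (k + 1) * (1 - x (j + k)) * (1 - x (j + k - 1)) * ∏ m ∈ Icc (j - 2) (j + k - 2), x m

lemma S2_eq_sum_strip (x : ℤ → ℤ) (n : ℕ) (j : ℤ) : S2 x n j = ∑ k ∈ Icc 2 n, strip x j k := by
  simp only [S2, strip, sum_add_distrib]

lemma strip_two (x : ℤ → ℤ) (j : ℤ) :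
    strip x j 2 = x (j - 2) * x (j - 1) * x j * (1 - x (j + 1)) * x (j + 2) := by
  have hIcc : Icc (j - 2) j = {j - 2, j - 1, j} := by
    ext m; simp only [mem_Icc, mem_insert, mem_singleton]; omega
  have hPar : Par 2 = 1 ∧ Par 3 = 0 := by simp [Par, Nat.even_add_one]
  simp only [strip, Nat.cast_ofNat, add_sub_cancel_right, show j + 2 - 1 = j + 1 by ring, hIcc,
    hPar, show 2 + 1 = 3 from rfl]
  rw [prod_insert (by simp only [mem_insert, mem_singleton]; omega),
    prod_insert (by simp only [mem_singleton]; omega), prod_singleton]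
  ring

section Rule156

variable {x y : ℤ → ℤ}

lemma prod_Icc_of_rule156 (hx : ∀ i, x i = 0 ∨ x i = 1)
    (hy : ∀ i, y i = f156 (x (i - 1)) (x i) (x (i + 1))) {a b : ℤ} (hab : a + 2 ≤ b) :
    ∏ m ∈ Icc a b, y m = ∏ m ∈ Icc a (b + 1), x m := by
  induction b, hab using Int.leInduction with
  | base =>
    have hy' : ∀ i, y (i + 1) = f156 (x i) (x (i + 1)) (x (i + 1 + 1)) := fun i ↦ by
      rw [hy, add_sub_cancel_right]
    rw [show a + 2 + 1 = a + 1 + 1 + 1 by ring, show a + 2 = a + 1 + 1 by ring]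
    simp (disch := omega) only [prod_Icc_add_one_right, Icc_self, prod_singleton]
    rw [hy a, hy' a, hy' (a + 1), f156_mul_f156_mul_f156_of_binary (hx _) (hx _) (hx _) (hx _)
      (hx _)]
  | succ b hb ih =>
    have hb₁ : b ∈ Icc a (b + 1) := mem_Icc.2 ⟨by omega, by omega⟩
    have hb₂ : b + 1 ∈ Icc a (b + 1) := mem_Icc.2 ⟨by omega, le_rfl⟩
    calc ∏ m ∈ Icc a (b + 1), y m
        = (∏ m ∈ Icc a (b + 1), x m) * f156 (x b) (x (b + 1)) (x (b + 1 + 1)) := by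
          rw [prod_Icc_add_one_right _ (by omega), ih, hy, add_sub_cancel_right]
      _ = (∏ m ∈ Icc a (b + 1), x m) * x (b + 1 + 1) := by
          rw [← mul_prod_eq_prod_of_binary (hx b) hb₁, ← mul_prod_eq_prod_of_binary (hx _) hb₂]
          linear_combination (∏ m ∈ Icc a (b + 1), x m) *
            mul_mul_f156_of_binary (x (b + 1 + 1)) (hx b) (hx (b + 1))
      _ = ∏ m ∈ Icc a (b + 1 + 1), x m := (prod_Icc_add_one_right _ (by omega)).symm

lemma strip_of_rule156 (hx : ∀ i, x i = 0 ∨ x i = 1)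
    (hy : ∀ i, y i = f156 (x (i - 1)) (x i) (x (i + 1))) (j : ℤ) {k : ℕ} (hk : 2 ≤ k) :
    strip y j k = strip x j (k + 1) := by
  have hprod : ∏ m ∈ Icc (j - 2) (j + k - 2), y m = ∏ m ∈ Icc (j - 2) (j + k - 1), x m := by
    rw [prod_Icc_of_rule156 hx hy (by omega), show j + k - 2 + 1 = j + k - 1 by ring]
  have hends : x (j + k - 2) * x (j + k - 1) * ∏ m ∈ Icc (j - 2) (j + k - 1), x m =
      ∏ m ∈ Icc (j - 2) (j + k - 1), x m := by
    rw [mul_assoc, mul_prod_eq_prod_of_binary (hx _) (mem_Icc.2 ⟨by omega, by omega⟩),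
      mul_prod_eq_prod_of_binary (hx _) (mem_Icc.2 ⟨by omega, by omega⟩)]
  have hPar : Par (k + 1 + 1) = Par k := Par_add_two k
  simp only [strip, hPar, Nat.cast_add, Nat.cast_one, hprod]
  simp only [← add_assoc, add_sub_cancel_right]
  set i : ℤ := j + k
  rw [show i + 1 - 2 = i - 1 by ring, ← hends, hy i, hy (i - 1), sub_add_cancel,
    show i - 1 - 1 = i - 2 by ring]
  linear_combination (∏ m ∈ Icc (j - 2) (i - 1), x m) *
    mul_mul_strip_f156_of_binary (x (i + 1)) (Par k) (Par (k + 1)) (hx (i - 2)) (hx (i - 1)) (hx i)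

end Rule156

theorem stmt13 (x : ℤ → ℤ) (hx : ∀ i, x i = 0 ∨ x i = 1)
    (y : ℤ → ℤ) (hy : ∀ i, y i = f156 (x (i - 1)) (x i) (x (i + 1)))
    (n : ℕ) (hn : 2 ≤ n) (j : ℤ) :
    S2 y n j = S2 x (n + 1) j -
      x (j - 2) * x (j - 1) * x j * (1 - x (j + 1)) * x (j + 2) := by
  rw [S2_eq_sum_strip, S2_eq_sum_strip, sum_Icc_add_one_right_eq_add_sum_shift _ hn, strip_two,
    sum_congr rfl fun k hk ↦ strip_of_rule156 hx hy j (mem_Icc.1 hk).1]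
  ring
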